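/- Let p be a prime and let e be the entry point of the Fibonacci sequence modulo p (the least positive integer with p | F_e). Then R_n^e ≡ F_{e-1}^{n-1} · I_n (mod p). -/
import Mathlib

open MvPolynomial Finset

namespace RmatAux

variable {R : Type*} [CommRing R]

noncomputable def exps (d i : ℕ) : Fin 2 →₀ ℕ :=
  Finsupp.single 0 i + Finsupp.single 1 (d - i)

@[simp] lemma pair_apply0 (a b : ℕ) :
    (Finsupp.single (0 : Fin 2) a + Finsupp.single (1 : Fin 2) b : Fin 2 →₀ ℕ) 0 = a := by
  simp [Finsupp.single_apply]

@[simp] lemma pair_apply1 (a b : ℕ) :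
    (Finsupp.single (0 : Fin 2) a + Finsupp.single (1 : Fin 2) b : Fin 2 →₀ ℕ) 1 = b := by
  simp [Finsupp.single_apply]

@[simp] lemma exps_apply0 (d i : ℕ) : exps d i 0 = i := pair_apply0 _ _
@[simp] lemma exps_apply1 (d i : ℕ) : exps d i 1 = d - i := pair_apply1 _ _

lemma pair_eq_pair_iff {a b a' b' : ℕ} :
    (Finsupp.single (0 : Fin 2) a + Finsupp.single 1 b : Fin 2 →₀ ℕ)
      = Finsupp.single (0 : Fin 2) a' + Finsupp.single 1 b' ↔ a = a' ∧ b = b' := by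
  constructor
  · intro h
    exact ⟨by simpa using DFunLike.congr_fun h 0, by simpa using DFunLike.congr_fun h 1⟩
  · rintro ⟨rfl, rfl⟩; rfl

lemma exps_inj {d i j : ℕ} (h : exps d i = exps d j) : i = j := by
  have := DFunLike.congr_fun h 0; simpa using this

lemma fin2_eq (v : Fin 2 →₀ ℕ) :
    v = Finsupp.single 0 (v 0) + Finsupp.single 1 (v 1) := by
  ext t
  fin_cases t
  · simp [Finsupp.single_apply]
  · simp [Finsupp.single_apply]

noncomputable def sigma (A : Matrix (Fin 2) (Fin 2) R) :
    MvPolynomial (Fin 2) R →ₐ[R] MvPolynomial (Fin 2) R :=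
  aeval (fun k => ∑ l, C (A l k) * X l)

@[simp] lemma sigma_X (A : Matrix (Fin 2) (Fin 2) R) (k : Fin 2) :
    sigma A (X k) = ∑ l, C (A l k) * X l := aeval_X _ _

lemma sigma_comp (A B : Matrix (Fin 2) (Fin 2) R) :
    (sigma A).comp (sigma B) = sigma (A * B) := by
  apply MvPolynomial.algHom_ext
  intro k
  simp only [AlgHom.comp_apply, sigma_X, Fin.sum_univ_two, map_add, map_mul, algHom_C,
    Matrix.mul_apply, C_add, C_mul, MvPolynomial.algebraMap_eq]
  ring

noncomputable def mexp (d j : ℕ) : MvPolynomial (Fin 2) R := monomial (exps d j) 1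

lemma mexp_def (d j : ℕ) : (mexp d j : MvPolynomial (Fin 2) R) = monomial (exps d j) 1 := rfl

lemma mexp_eq (d j : ℕ) :
    (mexp d j : MvPolynomial (Fin 2) R) = X 0 ^ j * X 1 ^ (d - j) := by
  rw [X_pow_eq_monomial, X_pow_eq_monomial, monomial_mul, one_mul]
  rfl

lemma sigma_mexp (A : Matrix (Fin 2) (Fin 2) R) (d j : ℕ) :
    sigma A (mexp d j)
      = (∑ l, C (A l 0) * X l) ^ j * (∑ l, C (A l 1) * X l) ^ (d - j) := by
  rw [mexp_eq, map_mul, map_pow, map_pow, sigma_X, sigma_X]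

lemma sigma_mexp_homog (A : Matrix (Fin 2) (Fin 2) R) {d j : ℕ} (hj : j ≤ d) :
    (sigma A (mexp d j)).IsHomogeneous d := by
  rw [sigma_mexp]
  have h1 : ∀ k : Fin 2,
      (∑ l, C (A l k) * X l : MvPolynomial (Fin 2) R).IsHomogeneous 1 := by
    intro k
    apply IsHomogeneous.sum
    intro l _
    simpa using (isHomogeneous_C (Fin 2) (A l k)).mul (isHomogeneous_X R l)
  have h := ((h1 0).pow j).mul ((h1 1).pow (d - j))
  simpa [Nat.add_sub_cancel' hj] using h

lemma decomp {n : ℕ} (P : MvPolynomial (Fin 2) R) (hP : P.IsHomogeneous (n - 1))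
    (hn : 0 < n) :
    P = ∑ i : Fin n, monomial (exps (n - 1) i) (coeff (exps (n - 1) i) P) := by
  classical
  have hdeg : ∀ v ∈ P.support, v 0 + v 1 = n - 1 := by
    intro v hv
    have := hP (mem_support_iff.mp hv)
    rw [Finsupp.weight_apply, Finsupp.sum_fintype] at this
    · simpa [Fin.sum_univ_two] using this
    · simp
  have hsub : P.support ⊆ Finset.univ.image (fun i : Fin n => exps (n - 1) i.1) := by
    intro v hv
    have h := hdeg v hv
    have hv0 : v 0 < n := by omega
    refine Finset.mem_image.mpr ⟨⟨v 0, hv0⟩, Finset.mem_univ _, ?_⟩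
    rw [exps, show ((⟨v 0, hv0⟩ : Fin n) : ℕ) = v 0 from rfl,
      show n - 1 - v 0 = v 1 by omega]
    exact (fin2_eq v).symm
  calc P = ∑ v ∈ P.support, monomial v (coeff v P) := (support_sum_monomial_coeff P).symm
    _ = ∑ v ∈ Finset.univ.image (fun i : Fin n => exps (n - 1) i.1),
          monomial v (coeff v P) := by
        apply Finset.sum_subset hsub
        intro v _ hv
        rw [notMem_support_iff.mp hv, map_zero]
    _ = ∑ i : Fin n, monomial (exps (n - 1) i) (coeff (exps (n - 1) i) P) := by
        apply Finset.sum_image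
        intro i _ j _ h
        exact Fin.ext (exps_inj h)

noncomputable def Phi (n : ℕ) (A : Matrix (Fin 2) (Fin 2) R) : Matrix (Fin n) (Fin n) R :=
  Matrix.of fun i j => coeff (exps (n - 1) i) (sigma A (mexp (n - 1) j))

lemma Phi_mul (n : ℕ) (A B : Matrix (Fin 2) (Fin 2) R) :
    Phi n (A * B) = Phi n A * Phi n B := by
  ext i j
  have hn : 0 < n := i.pos
  have hj : (j : ℕ) ≤ n - 1 := by omega
  have key : sigma A (sigma B (mexp (n - 1) j))
      = ∑ k : Fin n, C (coeff (exps (n - 1) k) (sigma B (mexp (n - 1) j)))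
          * sigma A (mexp (n - 1) k) := by
    conv_lhs => rw [decomp _ (sigma_mexp_homog B hj) hn]
    rw [map_sum]
    refine Finset.sum_congr rfl fun k _ => ?_
    rw [show (monomial (exps (n-1) k.1)
          (coeff (exps (n-1) k.1) (sigma B (mexp (n-1) j)))
        : MvPolynomial (Fin 2) R)
        = C (coeff (exps (n-1) k.1) (sigma B (mexp (n-1) j))) * mexp (n-1) k.1 by
      simp [mexp_def, C_mul_monomial]]
    rw [map_mul, algHom_C, MvPolynomial.algebraMap_eq]
  show coeff (exps (n-1) i) (sigma (A * B) (mexp (n-1) j)) = _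
  rw [← sigma_comp, AlgHom.comp_apply, key, MvPolynomial.coeff_sum, Matrix.mul_apply]
  refine Finset.sum_congr rfl fun k _ => ?_
  rw [coeff_C_mul]
  exact mul_comm _ _

lemma Phi_pow (n : ℕ) (A : Matrix (Fin 2) (Fin 2) R) (m : ℕ) (hm : 0 < m) :
    Phi n (A ^ m) = Phi n A ^ m := by
  induction m with
  | zero => omega
  | succ m ih =>
    rcases Nat.eq_zero_or_pos m with h | h
    · subst h; simp
    · rw [pow_succ, pow_succ, Phi_mul, ih h]

lemma coeff_key (d i j : ℕ) (hi : i ≤ d) (hj : j ≤ d) :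
    coeff (exps d i) (((X 0 + X 1) ^ j * X 0 ^ (d - j)) : MvPolynomial (Fin 2) R)
      = (j.choose (d - i) : R) := by
  rw [add_pow, Finset.sum_mul]
  have hterm : ∀ k ∈ range (j + 1),
      (X 0 ^ k * X 1 ^ (j - k) * (j.choose k : MvPolynomial (Fin 2) R) * X 0 ^ (d - j))
        = monomial (Finsupp.single 0 (k + (d - j)) + Finsupp.single 1 (j - k))
            ((j.choose k : R)) := by
    intro k _
    have hc : ((j.choose k : ℕ) : MvPolynomial (Fin 2) R)
        = monomial 0 ((j.choose k : ℕ) : R) := by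
      rw [← C_apply]
      exact (map_natCast (C : R →+* MvPolynomial (Fin 2) R) _).symm
    have hidx : (Finsupp.single (0 : Fin 2) k + Finsupp.single 1 (j - k) + 0
          + Finsupp.single 0 (d - j))
        = Finsupp.single (0 : Fin 2) (k + (d - j)) + Finsupp.single 1 (j - k) := by
      rw [Finsupp.single_add]
      abel
    rw [X_pow_eq_monomial, X_pow_eq_monomial, X_pow_eq_monomial, hc,
      monomial_mul, monomial_mul, monomial_mul, hidx]
    norm_num
  rw [Finset.sum_congr rfl hterm, MvPolynomial.coeff_sum]
  by_cases hcase : d - i ≤ j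
  · rw [Finset.sum_eq_single (j - (d - i))]
    · rw [coeff_monomial, if_pos, Nat.choose_symm hcase]
      rw [exps, pair_eq_pair_iff]
      omega
    · intro k hk hne
      rw [coeff_monomial, if_neg]
      rw [exps, pair_eq_pair_iff]
      have hk' := Finset.mem_range.mp hk
      omega
    · intro h
      exact absurd (Finset.mem_range.mpr (by omega)) h
  · rw [Finset.sum_eq_zero, Nat.choose_eq_zero_of_lt (by omega)]
    · simp
    · intro k hk
      rw [coeff_monomial, if_neg]
      rw [exps, pair_eq_pair_iff]
      have hk' := Finset.mem_range.mp hk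
      omega

def Qmat : Matrix (Fin 2) (Fin 2) R := !![1, 1; 1, 0]

lemma Phi_Q (n : ℕ) :
    (Phi n (Qmat : Matrix (Fin 2) (Fin 2) R))
      = Matrix.of fun i j : Fin n => ((j : ℕ).choose (n - 1 - i) : R) := by
  ext i j
  show coeff _ (sigma Qmat (mexp (n-1) j)) = _
  rw [sigma_mexp]
  have h0 : (∑ l, C ((Qmat : Matrix (Fin 2) (Fin 2) R) l 0) * X l) = X 0 + X 1 := by
    simp [Qmat, Fin.sum_univ_two]
  have h1 : (∑ l, C ((Qmat : Matrix (Fin 2) (Fin 2) R) l 1) * X l) = X 0 := by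
    simp [Qmat, Fin.sum_univ_two]
  rw [h0, h1, coeff_key (n-1) i j (by omega) (by omega)]
  rfl

lemma Phi_smul (n : ℕ) (c : R) :
    Phi n (c • (1 : Matrix (Fin 2) (Fin 2) R)) = c ^ (n - 1) • 1 := by
  ext i j
  have hj : (j : ℕ) ≤ n - 1 := by omega
  show coeff (exps (n-1) i) (sigma (c • 1) (mexp (n-1) j)) = _
  rw [sigma_mexp]
  have h : ∀ k : Fin 2, (∑ l, C ((c • (1 : Matrix (Fin 2) (Fin 2) R)) l k) * X l)
      = C c * X k := by
    intro k
    fin_cases k <;> simp [Fin.sum_univ_two, Matrix.one_apply, Matrix.smul_apply]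
  rw [h 0, h 1, mul_pow, mul_pow, mul_mul_mul_comm, ← pow_add,
    Nat.add_sub_cancel' hj, ← mexp_eq, ← C_pow, coeff_C_mul, mexp_def, coeff_monomial]
  rw [Matrix.smul_apply, Matrix.one_apply]
  by_cases hij : i = j
  · subst hij; simp
  · rw [if_neg, if_neg hij, smul_zero, mul_zero]
    intro hEq
    exact hij (Fin.ext (exps_inj hEq)).symm

lemma Q_pow (m : ℕ) :
    (Qmat : Matrix (Fin 2) (Fin 2) R) ^ (m + 1)
      = !![(Nat.fib (m + 2) : R), (Nat.fib (m + 1) : R);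
           (Nat.fib (m + 1) : R), (Nat.fib m : R)] := by
  induction m with
  | zero => norm_num [Qmat, pow_one]
  | succ m ih =>
    rw [pow_succ, ih, Qmat, Matrix.mul_fin_two]
    congr 1 <;> push_cast [Nat.fib_add_two] <;> ring

end RmatAux
open Matrix
/-- `R n` over `ZMod p`: the `n × n` matrix whose 1-based `(i,j)` entry is `C(i-1, n-j)`. -/
def RmatMod (p n : ℕ) : Matrix (Fin n) (Fin n) (ZMod p) :=
  Matrix.of fun i j => (Nat.choose i.1 (n - 1 - j.1) : ZMod p)

/-- If `e` is the entry point of the Fibonacci sequence modulo a prime `p`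
(the least positive integer with `p ∣ F_e`), then `R_n ^ e ≡ F_{e-1}^{n-1} I_n (mod p)`. -/
theorem Rmat_pow_entry_point (p n e : ℕ) (hp : p.Prime)
    (he : 0 < e) (hdvd : p ∣ Nat.fib e)
    (hmin : ∀ m : ℕ, 0 < m → m < e → ¬ p ∣ Nat.fib m) :
    RmatMod p n ^ e = ((Nat.fib (e - 1) : ZMod p) ^ (n - 1)) • (1 : Matrix (Fin n) (Fin n) (ZMod p)) := by
  obtain ⟨m, rfl⟩ : ∃ m, e = m + 1 := ⟨e - 1, (Nat.succ_pred_eq_of_pos he).symm⟩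
  have hR : RmatMod p n = (RmatAux.Phi n (RmatAux.Qmat : Matrix (Fin 2) (Fin 2) (ZMod p)))ᵀ := by
    rw [RmatAux.Phi_Q]
    ext i j
    rfl
  have hfe : (Nat.fib (m + 1) : ZMod p) = 0 := (ZMod.natCast_eq_zero_iff _ _).mpr hdvd
  have hQe : (RmatAux.Qmat : Matrix (Fin 2) (Fin 2) (ZMod p)) ^ (m + 1)
      = (Nat.fib m : ZMod p) • 1 := by
    rw [RmatAux.Q_pow]
    have h2 : (Nat.fib (m + 2) : ZMod p) = (Nat.fib m : ZMod p) := by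
      rw [Nat.fib_add_two]; push_cast; rw [hfe]; ring
    rw [h2, hfe]
    ext a b
    fin_cases a <;> fin_cases b <;>
      simp [Matrix.one_apply, Matrix.smul_apply]
  calc RmatMod p n ^ (m + 1)
      = ((RmatAux.Phi n (RmatAux.Qmat : Matrix (Fin 2) (Fin 2) (ZMod p))) ^ (m + 1))ᵀ := by
        rw [hR, Matrix.transpose_pow]
    _ = (RmatAux.Phi n ((RmatAux.Qmat : Matrix (Fin 2) (Fin 2) (ZMod p)) ^ (m + 1)))ᵀ := by
        rw [RmatAux.Phi_pow _ _ _ (Nat.succ_pos m)]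
    _ = (((Nat.fib m : ZMod p)) ^ (n - 1) • (1 : Matrix (Fin n) (Fin n) (ZMod p)))ᵀ := by
        rw [hQe, RmatAux.Phi_smul]
    _ = _ := by
        rw [Matrix.transpose_smul, Matrix.transpose_one]
        simp
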